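/- arXiv:2505.22100 — 3 statements merged into one kernel-verified Lean document; each statement's English description precedes it below -/
import Mathlib

section
/- For any pure state ψ = Σ_{p=1}^k z_p ⊗ w_p of Schmidt rank at most k in C^d ⊗ C^d, defining z = Σ_{p=1}^k |p⟩ ⊗ |z_p⟩ ∈ C^k ⊗ C^d and w = Σ_{q=1}^k |q⟩ ⊗ |w_q⟩ ∈ C^k ⊗ C^d, one has ⟨ψ| X |ψ⟩ = ⟨z ⊗ w| (k |φ_k⟩⟨φ_k| ⊗ X) |z ⊗ w⟩, where |φ_k⟩ = (1/√k) Σ_{i=1}^k |i⟩⊗|i⟩ is the maximally entangled state on C^k ⊗ C^k (with the tensor factors reordered so that the two C^k factors pair with φ_k and the two C^d factors pair with X). -/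
/-!
Write `Ω = ∑ᵢ |ii⟩` for the unnormalised maximally entangled vector, so that
`k |φ_k⟩⟨φ_k| = |Ω⟩⟨Ω|`. With `V = ⟨Ω| ⊗ 1` contracting the two `ℂ^k` factors,
`V (z ⊗ w) = ∑_p z_p ⊗ w_p = ψ` and `|Ω⟩⟨Ω| ⊗ X = Vᴴ X V`.
Hence both sides are the quadratic form of `X` at `ψ`.
-/

open scoped Matrix

namespace Matrix

variable {R κ ι : Type*} [CommSemiring R] [DecidableEq κ] [Fintype ι] [DecidableEq ι]

lemma star_dotProduct_conjTranspose_mul_mul_mulVec [StarRing R] {m n : Type*}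
    [Fintype m] [Fintype n]
    (X : Matrix m m R) (V : Matrix m n R) (v : n → R) :
    star v ⬝ᵥ ((Vᴴ * X * V) *ᵥ v) = star (V *ᵥ v) ⬝ᵥ (X *ᵥ (V *ᵥ v)) := by
  simp only [star_mulVec, dotProduct_mulVec, vecMul_vecMul, ← mulVec_mulVec]

variable (R κ ι) in
/-- The map `⟨Ω| ⊗ 1`, with `Ω = ∑ᵢ |ii⟩`, from `(ℂ^κ ⊗ ℂ^ι) ⊗ (ℂ^κ ⊗ ℂ^ι)` to `ℂ^ι ⊗ ℂ^ι`. -/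
def contractEntangled : Matrix (ι × ι) ((κ × ι) × (κ × ι)) R :=
  fun x r => if r.1.1 = r.2.1 ∧ x = (r.1.2, r.2.2) then 1 else 0

lemma contractEntangled_mulVec [Fintype κ] (z w : κ → ι → R) :
    contractEntangled R κ ι *ᵥ (fun r => z r.1.1 r.1.2 * w r.2.1 r.2.2) =
      fun x => ∑ p, z p x.1 * w p x.2 := by
  ext ⟨a, b⟩
  simp [contractEntangled, mulVec, dotProduct, Fintype.sum_prod_type, ite_and, eq_comm]

lemma conjTranspose_contractEntangled_mul_mul_contractEntangled_apply [StarRing R]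
    (X : Matrix (ι × ι) (ι × ι) R) (r c : (κ × ι) × (κ × ι)) :
    ((contractEntangled R κ ι)ᴴ * X * contractEntangled R κ ι) r c =
      (if r.1.1 = r.2.1 then 1 else 0) * (if c.1.1 = c.2.1 then 1 else 0) *
        X (r.1.2, r.2.2) (c.1.2, c.2.2) := by
  simp [contractEntangled, mul_apply, conjTranspose_apply, ite_and, apply_ite star]

end Matrix

lemma natCast_mul_inv_sqrt_mul_star_inv_sqrt {k : ℕ} (hk : k ≠ 0) :
    (k : ℂ) * ((1 / Real.sqrt k : ℝ) : ℂ) * star ((1 / Real.sqrt k : ℝ) : ℂ) = 1 := by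
  have hsqrt0 : Real.sqrt k ≠ 0 := (Real.sqrt_pos.2 (Nat.cast_pos.2 (Nat.pos_of_ne_zero hk))).ne'
  have hreal : (k : ℝ) * (1 / Real.sqrt k) * (1 / Real.sqrt k) = 1 := by
    field_simp
    exact (Real.sq_sqrt (Nat.cast_nonneg k)).symm
  rw [Complex.star_def, Complex.conj_ofReal]
  exact_mod_cast hreal

theorem stmt1_general (d k : ℕ)
    (X : Matrix (Fin d × Fin d) (Fin d × Fin d) ℂ)
    (z w : Fin k → Fin d → ℂ) :
    let ψ : Fin d × Fin d → ℂ := fun x => ∑ p, z p x.1 * w p x.2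
    let z' : Fin k × Fin d → ℂ := fun q => z q.1 q.2
    let w' : Fin k × Fin d → ℂ := fun q => w q.1 q.2
    let φ : Fin k × Fin k → ℂ := fun ij => if ij.1 = ij.2 then ((1 / Real.sqrt k : ℝ) : ℂ) else 0
    let M : Matrix ((Fin k × Fin d) × (Fin k × Fin d)) ((Fin k × Fin d) × (Fin k × Fin d)) ℂ :=
      fun r c => (k : ℂ) * φ (r.1.1, r.2.1) * star (φ (c.1.1, c.2.1)) *
        X (r.1.2, r.2.2) (c.1.2, c.2.2)
    let zw : (Fin k × Fin d) × (Fin k × Fin d) → ℂ := fun r => z' r.1 * w' r.2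
    star ψ ⬝ᵥ (X *ᵥ ψ) = star zw ⬝ᵥ (M *ᵥ zw) := by
  intro ψ z' w' φ M zw
  have hM : M = (Matrix.contractEntangled ℂ (Fin k) (Fin d))ᴴ * X *
      Matrix.contractEntangled ℂ (Fin k) (Fin d) := by
    ext r c
    have hk : k ≠ 0 := Fin.pos_iff_nonempty.2 ⟨r.1.1⟩ |>.ne'
    rw [Matrix.conjTranspose_contractEntangled_mul_mul_contractEntangled_apply]
    simp only [M, φ]
    split_ifs <;> simp only [natCast_mul_inv_sqrt_mul_star_inv_sqrt hk, mul_zero, zero_mul,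
      star_zero, mul_one]
  rw [hM, Matrix.star_dotProduct_conjTranspose_mul_mul_mulVec, Matrix.contractEntangled_mulVec]

/-- For a pure state `ψ = ∑_{p=1}^k z_p ⊗ w_p` of Schmidt rank at most `k` in `ℂ^d ⊗ ℂ^d`,
with `z = ∑_p |p⟩⊗|z_p⟩` and `w = ∑_q |q⟩⊗|w_q⟩` in `ℂ^k ⊗ ℂ^d`, one has
`⟨ψ|X|ψ⟩ = ⟨z⊗w| (k·|φ_k⟩⟨φ_k| ⊗ X) |z⊗w⟩`, where `φ_k` is the normalized maximally
entangled state on `ℂ^k ⊗ ℂ^k` and the tensor factors are reordered so that the two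
`ℂ^k` factors pair with `φ_k` and the two `ℂ^d` factors pair with `X`. -/
theorem stmt1 (d k : ℕ) (hk : 0 < k)
    (X : Matrix (Fin d × Fin d) (Fin d × Fin d) ℂ) (hX : X.IsHermitian)
    (z w : Fin k → Fin d → ℂ) :
    let ψ : Fin d × Fin d → ℂ := fun x => ∑ p, z p x.1 * w p x.2
    let z' : Fin k × Fin d → ℂ := fun q => z q.1 q.2
    let w' : Fin k × Fin d → ℂ := fun q => w q.1 q.2
    let φ : Fin k × Fin k → ℂ := fun ij => if ij.1 = ij.2 then ((1 / Real.sqrt k : ℝ) : ℂ) else 0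
    let M : Matrix ((Fin k × Fin d) × (Fin k × Fin d)) ((Fin k × Fin d) × (Fin k × Fin d)) ℂ :=
      fun r c => (k : ℂ) * φ (r.1.1, r.2.1) * star (φ (c.1.1, c.2.1)) *
        X (r.1.2, r.2.2) (c.1.2, c.2.2)
    let zw : (Fin k × Fin d) × (Fin k × Fin d) → ℂ := fun r => z' r.1 * w' r.2
    star ψ ⬝ᵥ (X *ᵥ ψ) = star zw ⬝ᵥ (M *ᵥ zw) :=
  stmt1_general d k X z w
end

section
/- A bipartite Hermitian operator X on C^d ⊗ C^d is k-block-positive if and only if the operator X_k = |φ_k⟩⟨φ_k| ⊗ X on C^{kd} ⊗ C^{kd} is 1-block-positive, i.e. ⟨u ⊗ v| X_k |u ⊗ v⟩ ≥ 0 for all product vectors u, v ∈ C^{kd}. -/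
/-!
For any vector `φ`, the quadratic form of `|φ⟩⟨φ| ⊗ X` at `f` equals the quadratic form of `X`
at the partial contraction `(⟨φ| ⊗ 1) f`. For `φ = φ_k` and a product vector `f = u ⊗ v`, with
`u = ∑ₐ |a⟩ ⊗ uₐ` and `v = ∑ₐ |a⟩ ⊗ vₐ`, this contraction is `k^{-1/2} ∑ₐ uₐ ⊗ vₐ`; and the
vectors `∑ₐ uₐ ⊗ vₐ` are exactly those of Schmidt rank at most `k`. So both conditions say that
the quadratic form of `X` is nonnegative on the same set of vectors, up to the factor `1/k`.
-/

open scoped ComplexOrder Matrix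

/-- `ψ` has Schmidt rank at most `k`. -/
def SchmidtRankLE (d k : ℕ) (ψ : Fin d × Fin d → ℂ) : Prop :=
  ∃ z w : Fin k → Fin d → ℂ, ψ = fun x => ∑ p, z p x.1 * w p x.2

/-- The normalized maximally entangled vector `φ_k` on `ℂ^k ⊗ ℂ^k`. -/
noncomputable def phiME (k : ℕ) : Fin k × Fin k → ℂ :=
  fun ij => if ij.1 = ij.2 then ((1 / Real.sqrt k : ℝ) : ℂ) else 0

/-- The operator `X_k = |φ_k⟩⟨φ_k| ⊗ X` on `(ℂ^k ⊗ ℂ^d) ⊗ (ℂ^k ⊗ ℂ^d) ≅ ℂ^{kd} ⊗ ℂ^{kd}`,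
with the `ℂ^k` factors paired against `|φ_k⟩⟨φ_k|` and the `ℂ^d` factors against `X`. -/
noncomputable def Xk (d k : ℕ) (X : Matrix (Fin d × Fin d) (Fin d × Fin d) ℂ) :
    Matrix ((Fin k × Fin d) × (Fin k × Fin d)) ((Fin k × Fin d) × (Fin k × Fin d)) ℂ :=
  fun r c => phiME k (r.1.1, r.2.1) * star (phiME k (c.1.1, c.2.1)) *
    X (r.1.2, r.2.2) (c.1.2, c.2.2)

section RankOneTensor

variable {κ ι : Type*}

/-- `|φ⟩⟨φ| ⊗ X`, with the `κ` factors paired against `φ` and the `ι` factors against `X`. -/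
def tensorRankOne (φ : κ × κ → ℂ) (X : Matrix (ι × ι) (ι × ι) ℂ) :
    Matrix ((κ × ι) × (κ × ι)) ((κ × ι) × (κ × ι)) ℂ :=
  fun r c => φ (r.1.1, r.2.1) * star (φ (c.1.1, c.2.1)) * X (r.1.2, r.2.2) (c.1.2, c.2.2)

/-- The partial contraction `(⟨φ| ⊗ 1) f`. -/
def contractWith [Fintype κ] (φ : κ × κ → ℂ) (f : (κ × ι) × (κ × ι) → ℂ) : ι × ι → ℂ :=
  fun x => ∑ p, star (φ p) * f (Equiv.prodProdProdComm κ κ ι ι (p, x))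

theorem tensorRankOne_mulVec_apply [Fintype κ] [Fintype ι] (φ : κ × κ → ℂ)
    (X : Matrix (ι × ι) (ι × ι) ℂ) (f : (κ × ι) × (κ × ι) → ℂ) (p : κ × κ) (x : ι × ι) :
    (tensorRankOne φ X *ᵥ f) (Equiv.prodProdProdComm κ κ ι ι (p, x)) =
      φ p * (X *ᵥ contractWith φ f) x := by
  rw [Matrix.mulVec, dotProduct, ← (Equiv.prodProdProdComm κ κ ι ι).sum_comp,
    Fintype.sum_prod_type, Finset.sum_comm]
  simp only [Matrix.mulVec, dotProduct, contractWith, Finset.mul_sum]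
  refine Finset.sum_congr rfl fun y _ => Finset.sum_congr rfl fun q _ => ?_
  simp only [tensorRankOne, Equiv.prodProdProdComm_apply]
  ring

theorem dotProduct_tensorRankOne_mulVec [Fintype κ] [Fintype ι] (φ : κ × κ → ℂ)
    (X : Matrix (ι × ι) (ι × ι) ℂ) (f : (κ × ι) × (κ × ι) → ℂ) :
    star f ⬝ᵥ (tensorRankOne φ X *ᵥ f) =
      star (contractWith φ f) ⬝ᵥ (X *ᵥ contractWith φ f) := by
  rw [dotProduct, ← (Equiv.prodProdProdComm κ κ ι ι).sum_comp, Fintype.sum_prod_type,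
    Finset.sum_comm]
  simp only [tensorRankOne_mulVec_apply, dotProduct, contractWith, Pi.star_apply, star_sum,
    star_mul', star_star, Finset.sum_mul]
  refine Finset.sum_congr rfl fun x _ => Finset.sum_congr rfl fun p _ => ?_
  ring

/-- `∑ₐ uₐ ⊗ vₐ`, where `uₐ = u (a, ·)` and `vₐ = v (a, ·)`. -/
def sumOfProducts [Fintype κ] (u v : κ × ι → ℂ) : ι × ι → ℂ :=
  fun x => ∑ a, u (a, x.1) * v (a, x.2)

end RankOneTensor

theorem dotProduct_real_smul_mulVec_real_smul {ι : Type*} [Fintype ι] (X : Matrix ι ι ℂ)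
    (t : ℝ) (ψ : ι → ℂ) :
    star (t • ψ) ⬝ᵥ (X *ᵥ (t • ψ)) = (t ^ 2) • (star ψ ⬝ᵥ (X *ᵥ ψ)) := by
  rw [star_smul, Matrix.mulVec_smul, dotProduct_smul, smul_dotProduct, smul_smul, star_trivial,
    sq]

theorem schmidtRankLE_iff (d k : ℕ) (ψ : Fin d × Fin d → ℂ) :
    SchmidtRankLE d k ψ ↔ ∃ u v : Fin k × Fin d → ℂ, ψ = sumOfProducts u v :=
  ⟨fun ⟨z, w, h⟩ => ⟨fun p => z p.1 p.2, fun p => w p.1 p.2, h⟩,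
    fun ⟨u, v, h⟩ => ⟨fun a i => u (a, i), fun a i => v (a, i), h⟩⟩

theorem Xk_eq_tensorRankOne (d k : ℕ) (X : Matrix (Fin d × Fin d) (Fin d × Fin d) ℂ) :
    Xk d k X = tensorRankOne (phiME k) X :=
  rfl

theorem contractWith_phiME_prod (d k : ℕ) (u v : Fin k × Fin d → ℂ) :
    contractWith (phiME k) (fun r : (Fin k × Fin d) × (Fin k × Fin d) => u r.1 * v r.2) =
      (1 / Real.sqrt k : ℝ) • sumOfProducts u v := by
  ext x
  simp only [contractWith, phiME, sumOfProducts, Fintype.sum_prod_type, Finset.mul_sum,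
    apply_ite star, star_zero, ite_mul, zero_mul, Finset.sum_ite_eq, Finset.mem_univ, if_true,
    Equiv.prodProdProdComm_apply, Pi.smul_apply, Complex.real_smul, Complex.star_def,
    Complex.conj_ofReal]

theorem stmt2_general (d k : ℕ) (hk : 0 < k)
    (X : Matrix (Fin d × Fin d) (Fin d × Fin d) ℂ) :
    (∀ ψ : Fin d × Fin d → ℂ, SchmidtRankLE d k ψ → 0 ≤ star ψ ⬝ᵥ (X *ᵥ ψ)) ↔
    (∀ u v : Fin k × Fin d → ℂ,
      0 ≤ star (fun r : (Fin k × Fin d) × (Fin k × Fin d) => u r.1 * v r.2) ⬝ᵥ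
        (Xk d k X *ᵥ fun r => u r.1 * v r.2)) := by
  have hscale : 0 < (1 / Real.sqrt k) ^ 2 := by positivity
  simp_rw [Xk_eq_tensorRankOne, dotProduct_tensorRankOne_mulVec, contractWith_phiME_prod,
    dotProduct_real_smul_mulVec_real_smul, smul_nonneg_iff_nonneg_of_pos_left hscale,
    schmidtRankLE_iff]
  exact ⟨fun h u v => h _ ⟨u, v, rfl⟩, fun h ψ ⟨u, v, hψ⟩ => hψ ▸ h u v⟩

/-- `X` is `k`-block-positive iff `X_k = |φ_k⟩⟨φ_k| ⊗ X` is `1`-block-positive, i.e.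
`⟨u⊗v| X_k |u⊗v⟩ ≥ 0` for all product vectors `u, v ∈ ℂ^{kd}`. -/
theorem stmt2 (d k : ℕ) (hk : 0 < k)
    (X : Matrix (Fin d × Fin d) (Fin d × Fin d) ℂ) (hX : X.IsHermitian) :
    (∀ ψ : Fin d × Fin d → ℂ, SchmidtRankLE d k ψ → 0 ≤ star ψ ⬝ᵥ (X *ᵥ ψ)) ↔
    (∀ u v : Fin k × Fin d → ℂ,
      0 ≤ star (fun r : (Fin k × Fin d) × (Fin k × Fin d) => u r.1 * v r.2) ⬝ᵥ
        (Xk d k X *ᵥ fun r => u r.1 * v r.2)) :=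
  stmt2_general d k hk X
end

section
/- For any partition λ of n with parts λ_1 ≥ ... ≥ λ_k > 0, the number of standard Young tableaux of shape λ equals n! divided by the product of hook lengths: f^λ = n! / Π_{(i,j)∈λ} h_λ(i,j). -/
/-!
Pad `λ` to `k ≥ ℓ(λ)` rows and put `β_i = λ_i + (k - 1 - i)`, a strictly decreasing sequence.
In row `i` the hook lengths together with the gaps `β_i - β_m` (`i < m < k`) are exactly
`1, …, β_i`, so `∏ h · ∏_{i<m} (β_i - β_m) = ∏ β_i!`, and it suffices to prove Frobenius' formula
`f^λ ∏ β_i! = n! ∏_{i<m} (β_i - β_m)`.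

The entry `n` of a standard tableau sits in a corner, so `f^λ = ∑_corners f^{λ - corner}`.
Removing the corner of row `i` lowers `β_i` by one, and the terms of the other rows vanish, so the
induction step is the identity `∑_i x_i Δ(x - e_i) = (∑_i x_i - C(k,2)) Δ(x)` for the Vandermonde
product `Δ`. Divided by `Δ(x)`, its left side is `∑_i x_i ∏_{j≠i} (x_i - x_j - 1) / (x_i - x_j)`,
which by Lagrange interpolation is the `X^{k-1}`-coefficient of the polynomial of degree `< k`
agreeing with `X (∏ (X - x_j) - ∏ (X - x_j - 1))` at the nodes; that coefficient only involves the
top two coefficients of the two products.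
-/

/-- `T` is a standard Young tableau of the skew shape `l / μ`: a bijective filling of the
cells of `l` outside `μ` by the values `1, …, |l| - |μ|` (and `0` elsewhere), strictly
increasing along rows and columns. -/
def IsStdFilling (μ l : YoungDiagram) (T : ℕ × ℕ → ℕ) : Prop :=
  Set.BijOn T (↑(l.cells \ μ.cells)) (Set.Icc 1 (l.card - μ.card)) ∧
  (∀ c, c ∉ l.cells \ μ.cells → T c = 0) ∧
  (∀ i j₁ j₂, j₁ < j₂ → (i, j₁) ∈ l.cells \ μ.cells → (i, j₂) ∈ l.cells \ μ.cells →
    T (i, j₁) < T (i, j₂)) ∧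
  (∀ i₁ i₂ j, i₁ < i₂ → (i₁, j) ∈ l.cells \ μ.cells → (i₂, j) ∈ l.cells \ μ.cells →
    T (i₁, j) < T (i₂, j))

/-- The number `f^{l/μ}` of standard Young tableaux of skew shape `l / μ`
(take `μ = ⊥` for straight shapes). -/
noncomputable def sytCount (μ l : YoungDiagram) : ℕ :=
  Nat.card { T : ℕ × ℕ → ℕ // IsStdFilling μ l T }

/-- The hook length `h_l(i,j)` of the box `(i,j)` of `l`: the number of boxes directly to
the right or directly below `(i,j)`, including `(i,j)` itself. -/
def hookLength (l : YoungDiagram) (c : ℕ × ℕ) : ℕ :=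
  (l.rowLen c.1 - c.2) + (l.colLen c.2 - c.1) - 1

open Finset Polynomial Lagrange Function Nat

section NodalShift

variable {R : Type*} [CommRing R] {ι : Type*} (v : ι → R) {s : Finset ι}

noncomputable def nodalShiftDiff (s : Finset ι) : R[X] :=
  X * (nodal s v - nodal s (fun i => v i + 1))

lemma coeff_nodal_card : (nodal s v).coeff #s = 1 := by
  nontriviality R
  simpa [natDegree_nodal] using (nodal_monic (s := s) (v := v)).coeff_natDegree

lemma eval_nodalShiftDiff [DecidableEq ι] {i : ι} (hi : i ∈ s) :
    (nodalShiftDiff v s).eval (v i) = v i * ∏ j ∈ s.erase i, (v i - v j - 1) := by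
  rw [nodalShiftDiff, eval_mul, eval_X, eval_sub, eval_nodal_at_node hi, eval_nodal,
    ← mul_prod_erase s _ hi]
  simp only [sub_add_eq_sub_sub, sub_self, zero_sub]
  ring

lemma nodalShiftDiff_cons [DecidableEq ι] {a : ι} {t : Finset ι} (ha : a ∉ t) :
    nodalShiftDiff v (t.cons a ha) =
      nodalShiftDiff v t * (X - C (v a)) + X * nodal t (fun i => v i + 1) := by
  simp only [nodalShiftDiff, cons_eq_insert, nodal_insert_eq_nodal ha, C_add, C_1]
  ring

lemma coeff_nodalShiftDiff_of_card_lt {n : ℕ} (hn : #s < n) :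
    (nodalShiftDiff v s).coeff n = 0 := by
  nontriviality R
  obtain ⟨n, rfl⟩ := Nat.exists_eq_add_of_lt hn
  rw [nodalShiftDiff, coeff_X_mul, coeff_sub]
  rcases (Nat.le_add_right #s n).eq_or_lt with h | h
  · rw [← h, coeff_nodal_card, coeff_nodal_card, sub_self]
  · rw [coeff_eq_zero_of_natDegree_lt, coeff_eq_zero_of_natDegree_lt, sub_self] <;>
      rwa [natDegree_nodal]

lemma coeff_card_nodalShiftDiff : (nodalShiftDiff v s).coeff #s = #s := by
  rcases s.eq_empty_or_nonempty with rfl | hs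
  · simp [nodalShiftDiff]
  have hcard : #s = #s - 1 + 1 := (Nat.succ_pred_eq_of_pos hs.card_pos).symm
  rw [nodalShiftDiff, hcard, coeff_X_mul, ← hcard, coeff_sub, nodal,
    prod_X_sub_C_coeff_card_pred s _ hs.card_pos, nodal,
    prod_X_sub_C_coeff_card_pred s _ hs.card_pos, sum_add_distrib, sum_const, nsmul_one]
  ring

lemma coeff_card_pred_nodalShiftDiff [DecidableEq ι] :
    (nodalShiftDiff v s).coeff (#s - 1) =
      -(((#s : R) - 1) * ∑ i ∈ s, v i + (#s).choose 2) := by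
  induction s using Finset.cons_induction with
  | empty => simp [nodalShiftDiff]
  | cons a t ha ih =>
    rcases t.eq_empty_or_nonempty with rfl | ht
    · simp [nodalShiftDiff]
    have hcard : #t = #t - 1 + 1 := (Nat.succ_pred_eq_of_pos ht.card_pos).symm
    rw [card_cons, Nat.add_sub_cancel, nodalShiftDiff_cons, coeff_add, hcard, coeff_mul_X_sub_C,
      coeff_X_mul, ← hcard, ih, coeff_card_nodalShiftDiff, nodal,
      prod_X_sub_C_coeff_card_pred t _ ht.card_pos, sum_cons, sum_add_distrib, sum_const,
      nsmul_one, Nat.choose_succ_succ', Nat.choose_one_right]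
    push_cast
    ring

end NodalShift

theorem sum_mul_prod_sub_sub_one_div_prod_sub {K : Type*} [Field K] {ι : Type*} [DecidableEq ι]
    {v : ι → K} {s : Finset ι} (hvs : Set.InjOn v s) :
    ∑ i ∈ s, v i * (∏ j ∈ s.erase i, (v i - v j - 1)) / ∏ j ∈ s.erase i, (v i - v j) =
      ∑ i ∈ s, v i - (#s).choose 2 := by
  rcases s.eq_empty_or_nonempty with rfl | hs
  · simp
  set Q := nodalShiftDiff v s - C (#s : K) * nodal s v
  have hQ : Q.degree < #s := by
    refine (degree_lt_iff_coeff_zero _ _).2 fun m hm => ?_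
    rw [coeff_sub, coeff_C_mul]
    rcases hm.eq_or_lt with rfl | hm
    · rw [coeff_card_nodalShiftDiff, coeff_nodal_card, mul_one, sub_self]
    · rw [coeff_nodalShiftDiff_of_card_lt v hm,
        coeff_eq_zero_of_natDegree_lt (natDegree_nodal (v := v) ▸ hm), mul_zero, sub_zero]
  have hQeval : ∀ i ∈ s, Q.eval (v i) = v i * ∏ j ∈ s.erase i, (v i - v j - 1) := fun i hi => by
    rw [eval_sub, eval_nodalShiftDiff v hi, eval_mul, eval_nodal_at_node hi, mul_zero, sub_zero]
  have hQcoeff : Q.coeff (#s - 1) = ∑ i ∈ s, v i - (#s).choose 2 := by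
    rw [coeff_sub, coeff_C_mul, coeff_card_pred_nodalShiftDiff, nodal,
      prod_X_sub_C_coeff_card_pred s _ hs.card_pos]
    ring
  rw [← hQcoeff, coeff_eq_sum hvs hQ]
  exact sum_congr rfl fun i hi => by rw [hQeval i hi]

def vandermondeProd {R : Type*} [CommMonoid R] [Sub R] (x : ℕ → R) (k : ℕ) : R :=
  ∏ i ∈ range k, ∏ j ∈ Ioo i k, (x i - x j)

section Vandermonde

variable {k : ℕ}

lemma vandermondeProd_pos {x : ℕ → ℕ} (hx : ∀ i j, i < j → j < k → x j < x i) :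
    0 < vandermondeProd x k :=
  prod_pos fun i _ => prod_pos fun j hj =>
    Nat.sub_pos_of_lt (hx i j (mem_Ioo.1 hj).1 (mem_Ioo.1 hj).2)

lemma Nat.cast_vandermondeProd {R : Type*} [CommRing R] {x : ℕ → ℕ}
    (hx : ∀ i j, i < j → j < k → x j ≤ x i) :
    ((vandermondeProd x k : ℕ) : R) = vandermondeProd (fun i => (x i : R)) k := by
  simp only [vandermondeProd, Nat.cast_prod]
  exact prod_congr rfl fun i _ => prod_congr rfl fun j hj =>
    Nat.cast_sub (hx i j (mem_Ioo.1 hj).1 (mem_Ioo.1 hj).2)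

lemma vandermondeProd_eq_zero {R : Type*} [CommRing R] {x : ℕ → R} {i j : ℕ} (hij : i < j)
    (hj : j < k) (h : x i = x j) : vandermondeProd x k = 0 :=
  prod_eq_zero (mem_range.2 (hij.trans hj))
    (prod_eq_zero (mem_Ioo.2 ⟨hij, hj⟩) (sub_eq_zero.2 h))

variable {K : Type*} [Field K] {x : ℕ → K} {i : ℕ}

lemma erase_range_eq_range_union_Ioo (hi : i < k) : (range k).erase i = range i ∪ Ioo i k := by
  ext j
  simp only [mem_erase, mem_range, mem_union, mem_Ioo]
  omega

lemma disjoint_range_Ioo (i k : ℕ) : Disjoint (range i) (Ioo i k) :=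
  disjoint_left.2 fun _ ha hb => (mem_range.1 ha).not_gt (mem_Ioo.1 hb).1

/-- Only the factors involving `x i` change. -/
theorem vandermondeProd_update_sub_one (hx : Set.InjOn x (range k)) (hi : i < k) :
    vandermondeProd (update x i (x i - 1)) k = vandermondeProd x k *
      ((∏ j ∈ (range k).erase i, (x i - x j - 1)) / ∏ j ∈ (range k).erase i, (x i - x j)) := by
  set y := update x i (x i - 1)
  have hne : ∀ a b, a < b → b < k → x a - x b ≠ 0 := fun a b hab hb =>
    sub_ne_zero.2 fun h => hab.ne (hx (mem_range.2 (hab.trans hb)) (mem_range.2 hb) h)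
  have hratio : vandermondeProd y k = vandermondeProd x k *
      ∏ a ∈ range k, ∏ b ∈ Ioo a k, (y a - y b) / (x a - x b) := by
    simp only [vandermondeProd, ← prod_mul_distrib]
    refine prod_congr rfl fun a _ => prod_congr rfl fun b hb => ?_
    rw [mul_div_cancel₀ _ (hne a b (mem_Ioo.1 hb).1 (mem_Ioo.1 hb).2)]
  have hy_self : y i = x i - 1 := update_self ..
  have hy : ∀ a, a ≠ i → y a = x a := fun a h => update_of_ne h ..
  set g : ℕ → K := fun j => (x i - x j - 1) / (x i - x j)
  have hrow_lt : ∀ a ∈ range i, ∏ b ∈ Ioo a k, (y a - y b) / (x a - x b) = g a := by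
    intro a ha
    have hai := (mem_range.1 ha).ne
    rw [prod_eq_single_of_mem i (mem_Ioo.2 ⟨mem_range.1 ha, hi⟩)]
    · rw [hy a hai, hy_self, ← neg_div_neg_eq]
      congr 1 <;> ring
    · intro b hb hbi
      rw [hy a hai, hy b hbi, div_self (hne a b (mem_Ioo.1 hb).1 (mem_Ioo.1 hb).2)]
  have hrow_self : ∏ b ∈ Ioo i k, (y i - y b) / (x i - x b) = ∏ b ∈ Ioo i k, g b :=
    prod_congr rfl fun b hb => by rw [hy_self, hy b (mem_Ioo.1 hb).1.ne', sub_right_comm]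
  have hrow_gt : ∀ a ∈ Ioo i k, ∏ b ∈ Ioo a k, (y a - y b) / (x a - x b) = 1 := by
    intro a ha
    refine prod_eq_one fun b hb => ?_
    have hab := mem_Ioo.1 hb
    rw [hy a (mem_Ioo.1 ha).1.ne', hy b ((mem_Ioo.1 ha).1.trans hab.1).ne',
      div_self (hne a b hab.1 hab.2)]
  have hsplit := erase_range_eq_range_union_Ioo hi
  rw [hratio, ← mul_prod_erase _ _ (mem_range.2 hi), hsplit, prod_union (disjoint_range_Ioo i k),
    prod_congr rfl hrow_lt, prod_congr rfl hrow_gt, prod_const_one, mul_one, hrow_self,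
    ← prod_div_distrib, prod_union (disjoint_range_Ioo i k), mul_comm (∏ b ∈ Ioo i k, g b)]

theorem sum_mul_vandermondeProd_update_sub_one (hx : Set.InjOn x (range k)) :
    ∑ i ∈ range k, x i * vandermondeProd (update x i (x i - 1)) k =
      (∑ i ∈ range k, x i - k.choose 2) * vandermondeProd x k := by
  have h := sum_mul_prod_sub_sub_one_div_prod_sub hx
  rw [card_range] at h
  rw [← h, sum_mul]
  refine sum_congr rfl fun i hi => ?_
  rw [vandermondeProd_update_sub_one hx (mem_range.1 hi)]
  ring

end Vandermonde

namespace YoungDiagram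

variable {l : YoungDiagram} {k i j m : ℕ}

lemma lt_colLen_zero_of_mem (h : (i, j) ∈ l) : i < l.colLen 0 :=
  mem_iff_lt_colLen.1 (l.up_left_mem le_rfl (Nat.zero_le j) h)

lemma rowLen_pos_iff : 0 < l.rowLen i ↔ i < l.colLen 0 := by
  rw [← mem_iff_lt_rowLen, mem_iff_lt_colLen]

lemma rowLen_eq_of_forall_mem_iff {n : ℕ} (h : ∀ j, (i, j) ∈ l ↔ j < n) : l.rowLen i = n := by
  have h₁ := h (l.rowLen i)
  have h₂ := h n
  rw [mem_iff_lt_rowLen] at h₁ h₂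
  omega

lemma colLen_le_colLen_of_le {μ ν : YoungDiagram} (h : μ ≤ ν) (j : ℕ) :
    μ.colLen j ≤ ν.colLen j := by
  by_contra! hlt
  exact (ν.colLen j).lt_irrefl (mem_iff_lt_colLen.1 (h (mem_iff_lt_colLen.2 hlt)))

@[to_additive]
lemma prod_cells_eq_prod_range {M : Type*} [CommMonoid M] (hk : l.colLen 0 ≤ k)
    (f : ℕ × ℕ → M) :
    ∏ c ∈ l.cells, f c = ∏ i ∈ range k, ∏ j ∈ range (l.rowLen i), f (i, j) := by
  rw [← prod_fiberwise_of_maps_to (g := Prod.fst) (t := range k)]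
  · refine prod_congr rfl fun i _ => ?_
    rw [← row, row_eq_prod, prod_product, prod_singleton]
  · rintro ⟨i, j⟩ h
    exact mem_range.2 ((lt_colLen_zero_of_mem ((mem_cells _).1 h)).trans_le hk)

lemma card_eq_sum_rowLen (hk : l.colLen 0 ≤ k) : l.card = ∑ i ∈ range k, l.rowLen i := by
  rw [YoungDiagram.card, card_eq_sum_ones, sum_cells_eq_sum_range hk]
  simp

def beta (l : YoungDiagram) (k i : ℕ) : ℕ := l.rowLen i + (k - 1 - i)

lemma beta_antitone : Antitone (l.beta k) := fun i m him => by
  have := l.rowLen_anti i m him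
  simp only [beta]
  omega

lemma beta_lt_beta (him : i < m) (hm : m < k) : l.beta k m < l.beta k i := by
  have := l.rowLen_anti i m him.le
  simp only [beta]
  omega

lemma sum_beta (hk : l.colLen 0 ≤ k) : ∑ i ∈ range k, l.beta k i = l.card + k.choose 2 := by
  simp only [beta]
  rw [sum_add_distrib, ← card_eq_sum_rowLen hk, sum_range_reflect (fun i => i) k, sum_range_id,
    choose_two_right]

lemma hookLength_lt_hookLength (hj : j < m) (hm : m < l.rowLen i) :
    hookLength l (i, m) < hookLength l (i, j) := by
  have := l.colLen_anti j m hj.le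
  have := mem_iff_lt_colLen.1 (mem_iff_lt_rowLen.2 hm)
  simp only [hookLength]
  omega

lemma hookLength_mem_Icc (hk : l.colLen 0 ≤ k) (hj : j < l.rowLen i) :
    hookLength l (i, j) ∈ Icc 1 (l.beta k i) := by
  have := l.colLen_anti 0 j (Nat.zero_le j)
  have := mem_iff_lt_colLen.1 (mem_iff_lt_rowLen.2 hj)
  rw [mem_Icc]
  simp only [hookLength, beta]
  omega

lemma hookLength_ne_beta_sub_beta (him : i < m) (hm : m < k) (hj : j < l.rowLen i) :
    hookLength l (i, j) ≠ l.beta k i - l.beta k m := by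
  have := l.rowLen_anti i m him.le
  have := mem_iff_lt_colLen.1 (mem_iff_lt_rowLen.2 hj)
  have : m < l.colLen j ↔ j < l.rowLen m := by rw [← mem_iff_lt_colLen, mem_iff_lt_rowLen]
  simp only [hookLength, beta]
  omega

/-- The hook lengths of row `i` and the gaps `β_i - β_m` (`i < m < k`) together fill
`[1, β_i]`. -/
lemma prod_hookLength_row_mul_prod_beta_sub (hk : l.colLen 0 ≤ k) (hi : i < k) :
    (∏ j ∈ range (l.rowLen i), hookLength l (i, j)) * ∏ m ∈ Ioo i k, (l.beta k i - l.beta k m) =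
      (l.beta k i)! := by
  set hooks := (range (l.rowLen i)).image fun j => hookLength l (i, j)
  set gaps := (Ioo i k).image fun m => l.beta k i - l.beta k m
  have hhooks : Set.InjOn (fun j => hookLength l (i, j)) (range (l.rowLen i)) :=
    StrictAntiOn.injOn fun a _ b hb hab => hookLength_lt_hookLength hab (mem_range.1 hb)
  have hgaps : Set.InjOn (fun m => l.beta k i - l.beta k m) (Ioo i k) := by
    refine StrictMonoOn.injOn fun a ha b hb hab => ?_
    have := beta_lt_beta (l := l) (mem_Ioo.1 ha).1 (mem_Ioo.1 ha).2
    have := beta_lt_beta (l := l) hab (mem_Ioo.1 hb).2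
    omega
  have hdisj : Disjoint hooks gaps := by
    rw [disjoint_left]
    rintro _ hh hg
    obtain ⟨j, hj, rfl⟩ := mem_image.1 hh
    obtain ⟨m, hm, h⟩ := mem_image.1 hg
    exact hookLength_ne_beta_sub_beta (mem_Ioo.1 hm).1 (mem_Ioo.1 hm).2 (mem_range.1 hj) h.symm
  have hunion : hooks ∪ gaps = Icc 1 (l.beta k i) := by
    refine eq_of_subset_of_card_le (union_subset ?_ ?_) ?_
    · simp only [hooks, image_subset_iff, mem_range]
      exact fun j hj => hookLength_mem_Icc hk hj
    · simp only [gaps, image_subset_iff, mem_Ioo, mem_Icc]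
      intro m hm
      have := beta_lt_beta (l := l) hm.1 hm.2
      omega
    · rw [card_union_of_disjoint hdisj, Finset.card_image_of_injOn hhooks,
        Finset.card_image_of_injOn hgaps, card_range, Nat.card_Ioo, Nat.card_Icc, beta]
      omega
  rw [← prod_image (f := fun a => a) hhooks, ← prod_image (f := fun a => a) hgaps,
    ← prod_union hdisj, hunion, ← Finset.Ico_add_one_right_eq_Icc, prod_Ico_id_eq_factorial]

theorem prod_hookLength_mul_vandermondeProd_beta (hk : l.colLen 0 ≤ k) :
    (∏ c ∈ l.cells, hookLength l c) * vandermondeProd (l.beta k) k =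
      ∏ i ∈ range k, (l.beta k i)! := by
  rw [prod_cells_eq_prod_range hk, vandermondeProd, ← prod_mul_distrib]
  exact prod_congr rfl fun i hi => prod_hookLength_row_mul_prod_beta_sub hk (mem_range.1 hi)

def cornerRows (l : YoungDiagram) : Finset ℕ :=
  {i ∈ range (l.colLen 0) | l.rowLen (i + 1) < l.rowLen i}

def cornerCell (l : YoungDiagram) (i : ℕ) : ℕ × ℕ := (i, l.rowLen i - 1)

lemma mem_cornerRows : i ∈ l.cornerRows ↔ i < l.colLen 0 ∧ l.rowLen (i + 1) < l.rowLen i := by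
  rw [cornerRows, mem_filter, mem_range]

lemma cornerCell_mem (hi : i ∈ l.cornerRows) : l.cornerCell i ∈ l := by
  rw [cornerCell, mem_iff_lt_rowLen]
  have := (mem_cornerRows.1 hi).2
  omega

lemma eq_cornerCell_of_le (hi : i ∈ l.cornerRows) {c : ℕ × ℕ} (hc : c ∈ l)
    (h : l.cornerCell i ≤ c) : c = l.cornerCell i := by
  obtain ⟨a, b⟩ := c
  obtain ⟨ha, hb⟩ := Prod.mk_le_mk.1 h
  have := mem_iff_lt_rowLen.1 hc
  have := l.rowLen_anti (i + 1) a
  have := (mem_cornerRows.1 hi).2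
  rcases ha.eq_or_lt with rfl | ha
  · rw [cornerCell, Prod.mk.injEq]
    omega
  · omega

lemma isLowerSet_erase_cornerCell (hi : i ∈ l.cornerRows) :
    IsLowerSet (l.cells.erase (l.cornerCell i) : Set (ℕ × ℕ)) := by
  intro c d hdc hc
  simp only [coe_erase, Set.mem_sdiff, mem_coe, Set.mem_singleton_iff] at hc ⊢
  exact ⟨l.isLowerSet hdc hc.1, fun hd => hc.2 (eq_cornerCell_of_le hi hc.1 (hd ▸ hdc))⟩

def eraseCorner (l : YoungDiagram) (i : ℕ) : YoungDiagram :=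
  if hi : i ∈ l.cornerRows then ⟨l.cells.erase (l.cornerCell i), isLowerSet_erase_cornerCell hi⟩
  else l

lemma cells_eraseCorner (hi : i ∈ l.cornerRows) :
    (l.eraseCorner i).cells = l.cells.erase (l.cornerCell i) := by
  rw [eraseCorner, dif_pos hi]

lemma mem_eraseCorner (hi : i ∈ l.cornerRows) {c : ℕ × ℕ} :
    c ∈ l.eraseCorner i ↔ c ≠ l.cornerCell i ∧ c ∈ l := by
  rw [← mem_cells, cells_eraseCorner hi, mem_erase, mem_cells]

lemma eraseCorner_le (hi : i ∈ l.cornerRows) : l.eraseCorner i ≤ l :=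
  fun _ hc => ((mem_eraseCorner hi).1 hc).2

lemma card_eraseCorner (hi : i ∈ l.cornerRows) : (l.eraseCorner i).card = l.card - 1 := by
  rw [YoungDiagram.card, cells_eraseCorner hi, card_erase_of_mem (cornerCell_mem hi)]

lemma rowLen_eraseCorner (hi : i ∈ l.cornerRows) :
    (l.eraseCorner i).rowLen = update l.rowLen i (l.rowLen i - 1) := by
  funext a
  refine rowLen_eq_of_forall_mem_iff fun b => ?_
  rw [mem_eraseCorner hi, mem_iff_lt_rowLen, cornerCell, Ne, Prod.mk.injEq]
  rcases eq_or_ne a i with rfl | ha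
  · have := (mem_cornerRows.1 hi).2
    rw [update_self]
    omega
  · simp [ha]

lemma beta_pos (hi : i ∈ l.cornerRows) : 0 < l.beta k i := by
  have := (mem_cornerRows.1 hi).2
  simp only [beta]
  omega

lemma beta_eraseCorner (hi : i ∈ l.cornerRows) :
    (l.eraseCorner i).beta k = update (l.beta k) i (l.beta k i - 1) := by
  funext j
  have := (mem_cornerRows.1 hi).2
  rcases eq_or_ne j i with rfl | hj
  · simp only [beta, rowLen_eraseCorner hi, update_self]
    omega
  · simp only [beta, rowLen_eraseCorner hi, update_of_ne hj]

lemma cast_beta_eraseCorner {R : Type*} [AddGroupWithOne R] (hi : i ∈ l.cornerRows) :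
    (fun j => ((l.eraseCorner i).beta k j : R)) =
      update (fun j => (l.beta k j : R)) i (l.beta k i - 1) := by
  funext j
  rcases eq_or_ne j i with rfl | hj
  · simp [beta_eraseCorner hi, Nat.cast_sub (beta_pos hi)]
  · simp [beta_eraseCorner hi, update_of_ne hj]

lemma prod_factorial_beta_eq_mul_eraseCorner (hi : i ∈ l.cornerRows) (hik : i < k) :
    ∏ j ∈ range k, (l.beta k j)! = l.beta k i * ∏ j ∈ range k, ((l.eraseCorner i).beta k j)! := by
  rw [beta_eraseCorner hi, ← mul_prod_erase _ _ (mem_range.2 hik),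
    ← mul_prod_erase _ _ (mem_range.2 hik), update_self, ← mul_assoc,
    Nat.mul_factorial_pred (beta_pos hi).ne']
  exact congrArg _ (prod_congr rfl fun j hj => by rw [update_of_ne (ne_of_mem_erase hj)])

/-- For a non-corner row `i` either `β_{i+1} = β_i - 1`, so that the update repeats an entry,
or `β_i = 0`. -/
lemma beta_mul_vandermondeProd_update_eq_zero {R : Type*} [CommRing R] (hk : l.colLen 0 ≤ k)
    (hik : i < k) (hi : i ∉ l.cornerRows) :
    (l.beta k i : R) *
      vandermondeProd (update (fun j => (l.beta k j : R)) i (l.beta k i - 1)) k = 0 := by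
  have hanti := l.rowLen_anti i (i + 1) i.le_succ
  have hpos := rowLen_pos_iff (l := l) (i := i)
  have hpos_succ := rowLen_pos_iff (l := l) (i := i + 1)
  have hcorner := mem_cornerRows.not.1 hi
  by_cases hik' : i + 1 < k
  · have hβ : l.beta k i = l.beta k (i + 1) + 1 := by
      simp only [beta]
      omega
    refine mul_eq_zero_of_right _ (vandermondeProd_eq_zero i.lt_succ_self hik' ?_)
    rw [update_self, update_of_ne i.succ_ne_self, hβ]
    push_cast
    ring
  · have hβ : l.beta k i = 0 := by
      simp only [beta]
      omega
    rw [hβ, Nat.cast_zero, zero_mul]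

lemma strictMonoOn_iff_rows_cols {D : Finset (ℕ × ℕ)} (hD : IsLowerSet (D : Set (ℕ × ℕ)))
    {T : ℕ × ℕ → ℕ} : StrictMonoOn T D ↔
      (∀ i j₁ j₂, j₁ < j₂ → (i, j₁) ∈ D → (i, j₂) ∈ D → T (i, j₁) < T (i, j₂)) ∧
      (∀ i₁ i₂ j, i₁ < i₂ → (i₁, j) ∈ D → (i₂, j) ∈ D → T (i₁, j) < T (i₂, j)) := by
  refine ⟨fun hT => ⟨fun i j₁ j₂ h h₁ h₂ => hT h₁ h₂ (Prod.mk_lt_mk_iff_right.2 h),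
    fun i₁ i₂ j h h₁ h₂ => hT h₁ h₂ (Prod.mk_lt_mk_iff_left.2 h)⟩, ?_⟩
  rintro ⟨hrow, hcol⟩ ⟨a₁, a₂⟩ ha ⟨b₁, b₂⟩ hb hab
  have hmid : (a₁, b₂) ∈ D := hD (Prod.mk_le_mk.2 ⟨hab.le.1, le_rfl⟩) hb
  rcases Prod.lt_iff.1 hab with ⟨h₁, h₂⟩ | ⟨h₁, h₂⟩
  · refine lt_of_le_of_lt ?_ (hcol _ _ _ h₁ hmid hb)
    rcases h₂.eq_or_lt with rfl | h₂
    · exact le_rfl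
    · exact (hrow _ _ _ h₂ ha hmid).le
  · refine lt_of_lt_of_le (hrow _ _ _ h₂ ha hmid) ?_
    rcases h₁.eq_or_lt with rfl | h₁
    · exact le_rfl
    · exact (hcol _ _ _ h₁ hmid hb).le

lemma isStdFilling_bot_iff {T : ℕ × ℕ → ℕ} : IsStdFilling ⊥ l T ↔
    Set.BijOn T l.cells (Set.Icc 1 l.card) ∧ (∀ c, c ∉ l.cells → T c = 0) ∧
      StrictMonoOn T l.cells := by
  rw [IsStdFilling, strictMonoOn_iff_rows_cols l.isLowerSet, cells_bot, sdiff_empty,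
    show (⊥ : YoungDiagram).card = 0 from rfl, Nat.sub_zero]

instance finite_isStdFilling (μ l : YoungDiagram) :
    Finite {T : ℕ × ℕ → ℕ // IsStdFilling μ l T} := by
  refine Finite.of_injective (β := ↥(l.cells \ μ.cells) → ↥(Set.Icc 1 (l.card - μ.card)))
    (fun T c => ⟨T.1 c, T.2.1.mapsTo c.2⟩) fun T₁ T₂ h => Subtype.ext (funext fun c => ?_)
  by_cases hc : c ∈ l.cells \ μ.cells
  · exact congrArg Subtype.val (congrFun h ⟨c, hc⟩)
  · rw [T₁.2.2.1 c hc, T₂.2.2.1 c hc]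

lemma sytCount_of_card_eq_zero (hl : l.card = 0) : sytCount ⊥ l = 1 := by
  have hcells : l.cells = ∅ := card_eq_zero.1 hl
  rw [sytCount, Nat.card_eq_one_iff_exists]
  refine ⟨⟨0, isStdFilling_bot_iff.2 ?_⟩, fun T => Subtype.ext (funext fun c => ?_)⟩
  · rw [hcells, hl]
    exact ⟨by simp, fun _ _ => rfl, fun _ h => by simp at h⟩
  · exact (isStdFilling_bot_iff.1 T.2).2.1 c (by simp [hcells])

lemma isStdFilling_bot_iff_eraseCorner (hi : i ∈ l.cornerRows) {T : ℕ × ℕ → ℕ}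
    (hT : T (l.cornerCell i) = l.card) :
    IsStdFilling ⊥ l T ↔ IsStdFilling ⊥ (l.eraseCorner i) (update T (l.cornerCell i) 0) := by
  set c := l.cornerCell i
  set D := (l.eraseCorner i).cells
  have hc : c ∈ l.cells := cornerCell_mem hi
  have hD : D = l.cells.erase c := cells_eraseCorner hi
  have hcD : c ∉ D := hD ▸ notMem_erase c l.cells
  have hcells : l.cells = insert c D := by rw [hD, insert_erase hc]
  have hIcc : Set.Icc 1 l.card = insert (T c) (Set.Icc 1 (l.eraseCorner i).card) := by
    have : 1 ≤ l.card := card_pos.2 ⟨c, hc⟩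
    rw [card_eraseCorner hi, hT]
    ext
    simp only [Set.mem_Icc, Set.mem_insert_iff]
    omega
  have heq : Set.EqOn (update T c 0) T D := fun d hd =>
    update_of_ne (ne_of_mem_of_not_mem hd hcD) ..
  have hbij : Set.BijOn T l.cells (Set.Icc 1 l.card) ↔
      Set.BijOn (update T c 0) D (Set.Icc 1 (l.eraseCorner i).card) := by
    rw [hIcc, hcells, coe_insert, Set.BijOn.insert_iff hcD (by simp [card_eraseCorner hi, hT]),
      heq.bijOn_iff]
  have hzero : (∀ d, d ∉ l.cells → T d = 0) ↔ ∀ d, d ∉ D → update T c 0 d = 0 := by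
    refine ⟨fun h d hd => ?_, fun h d hd => ?_⟩
    · rcases eq_or_ne d c with rfl | hdc
      · exact update_self ..
      · rw [update_of_ne hdc]
        exact h d (by rw [hcells, mem_insert]; tauto)
    · have hdc : d ≠ c := fun e => hd (e ▸ hc)
      rw [← update_of_ne hdc 0 T]
      exact h d fun h' => hd (hcells ▸ mem_insert_of_mem h')
  rw [isStdFilling_bot_iff, isStdFilling_bot_iff, ← hbij, ← hzero]
  refine and_congr_right fun hbij => and_congr_right fun _ => ⟨fun hmono => ?_, fun hmono => ?_⟩
  · refine (hmono.mono ?_).congr heq.symm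
    rw [hcells, coe_insert]
    exact Set.subset_insert c D
  · intro a ha b hb hab
    rcases eq_or_ne b c with hbc | hbc
    · have hTa := (hbij.mapsTo ha).2
      have : T a ≠ T b := fun h => hab.ne (hbij.injOn ha hb h)
      rw [hbc, hT] at *
      omega
    have hac : a ≠ c := by
      rintro rfl
      exact hab.ne (eq_cornerCell_of_le hi hb hab.le).symm
    have hmemD : ∀ d ∈ (l.cells : Set (ℕ × ℕ)), d ≠ c → d ∈ (D : Set (ℕ × ℕ)) :=
      fun d hd hdc => by
        rw [hcells, coe_insert] at hd
        exact hd.resolve_left hdc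
    rw [← heq (hmemD a ha hac), ← heq (hmemD b hb hbc)]
    exact hmono (hmemD a ha hac) (hmemD b hb hbc) hab

lemma exists_mem_cornerRows_eq_card {T : ℕ × ℕ → ℕ} (hT : IsStdFilling ⊥ l T)
    (hl : l.card ≠ 0) : ∃ i ∈ l.cornerRows, T (l.cornerCell i) = l.card := by
  obtain ⟨hbij, -, hmono⟩ := isStdFilling_bot_iff.1 hT
  obtain ⟨⟨a, b⟩, hc, hTc⟩ := hbij.surjOn (Set.right_mem_Icc.2 (one_le_iff_ne_zero.2 hl))
  have hmax : ∀ d ∈ l, ¬ (a, b) < d := fun d hd hlt => by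
    have := hmono hc hd hlt
    have := (hbij.mapsTo hd).2
    omega
  have hb : b < l.rowLen a := mem_iff_lt_rowLen.1 hc
  have hright : ¬ b + 1 < l.rowLen a := fun h =>
    hmax _ (mem_iff_lt_rowLen.2 h) (Prod.mk_lt_mk_iff_right.2 b.lt_succ_self)
  have hbelow : ¬ b < l.rowLen (a + 1) := fun h =>
    hmax _ (mem_iff_lt_rowLen.2 h) (Prod.mk_lt_mk_iff_left.2 a.lt_succ_self)
  refine ⟨a, mem_cornerRows.2 ⟨lt_colLen_zero_of_mem hc, by omega⟩, ?_⟩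
  rwa [cornerCell, show l.rowLen a - 1 = b by omega]

theorem sytCount_eq_sum_cornerRows (hl : l.card ≠ 0) :
    sytCount ⊥ l = ∑ i ∈ l.cornerRows, sytCount ⊥ (l.eraseCorner i) := by
  have hrestore : ∀ i ∈ l.cornerRows, ∀ T, IsStdFilling ⊥ (l.eraseCorner i) T →
      update (update T (l.cornerCell i) l.card) (l.cornerCell i) 0 = T := fun i hi T hT => by
    rw [update_idem, update_eq_self_iff]
    refine ((isStdFilling_bot_iff.1 hT).2.1 _ ?_).symm
    rw [cells_eraseCorner hi]
    exact notMem_erase _ _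
  let extend : (Σ i : l.cornerRows, {T // IsStdFilling ⊥ (l.eraseCorner i) T}) →
      {T // IsStdFilling ⊥ l T} := fun p =>
    ⟨update p.2.1 (l.cornerCell p.1) l.card, (isStdFilling_bot_iff_eraseCorner p.1.2
      (update_self ..)).2 (by rw [hrestore _ p.1.2 _ p.2.2]; exact p.2.2)⟩
  have hinj : Injective extend := by
    rintro ⟨⟨i, hi⟩, T⟩ ⟨⟨i', hi'⟩, T'⟩ h
    have hval : update T.1 (l.cornerCell i) l.card = update T'.1 (l.cornerCell i') l.card :=
      congrArg Subtype.val h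
    have hii' : i = i' := by
      refine congrArg Prod.fst ((isStdFilling_bot_iff.1 (extend ⟨⟨i, hi⟩, T⟩).2).1.injOn
        (cornerCell_mem hi) (cornerCell_mem hi') ?_)
      change update T.1 _ _ _ = update T.1 _ _ _
      rw [update_self, hval, update_self]
    subst hii'
    refine Sigma.ext rfl (heq_of_eq (Subtype.ext ?_))
    rw [← hrestore i hi _ T.2, ← hrestore i hi _ T'.2, hval]
  have hsurj : Surjective extend := by
    rintro ⟨T, hT⟩
    obtain ⟨i, hi, hTi⟩ := exists_mem_cornerRows_eq_card hT hl
    refine ⟨⟨⟨i, hi⟩, ⟨_, (isStdFilling_bot_iff_eraseCorner hi hTi).1 hT⟩⟩, Subtype.ext ?_⟩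
    change update (update T _ 0) _ _ = T
    rw [update_idem, ← hTi, update_eq_self]
  rw [sytCount, ← Nat.card_congr (Equiv.ofBijective extend ⟨hinj, hsurj⟩), Nat.card_sigma,
    ← sum_coe_sort l.cornerRows]
  rfl

lemma sytCount_eraseCorner_mul_prod_factorial_beta {R : Type*} [CommRing R]
    (hk : l.colLen 0 ≤ k) (hi : i ∈ l.cornerRows)
    (h : sytCount ⊥ (l.eraseCorner i) * ∏ j ∈ range k, ((l.eraseCorner i).beta k j)! =
      (l.eraseCorner i).card ! * vandermondeProd ((l.eraseCorner i).beta k) k) :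
    (sytCount ⊥ (l.eraseCorner i) : R) * ∏ j ∈ range k, ((l.beta k j)! : R) =
      (l.card - 1)! * ((l.beta k i : R) *
        vandermondeProd (update (fun j => (l.beta k j : R)) i (l.beta k i - 1)) k) := by
  have key : sytCount ⊥ (l.eraseCorner i) * ∏ j ∈ range k, (l.beta k j)! =
      (l.eraseCorner i).card ! * (l.beta k i * vandermondeProd ((l.eraseCorner i).beta k) k) := by
    rw [prod_factorial_beta_eq_mul_eraseCorner hi ((mem_cornerRows.1 hi).1.trans_le hk),
      mul_left_comm, h]
    ring
  rw [← cast_beta_eraseCorner hi, ← card_eraseCorner hi,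
    ← Nat.cast_vandermondeProd fun a b hab _ => beta_antitone hab.le]
  have := congrArg (Nat.cast : ℕ → R) key
  push_cast at this
  exact this

/-- Frobenius' formula `f^λ = n! ∏_{i<m} (β_i - β_m) / ∏ β_i!`. -/
theorem sytCount_mul_prod_factorial_beta (hk : l.colLen 0 ≤ k) :
    sytCount ⊥ l * ∏ i ∈ range k, (l.beta k i)! = l.card ! * vandermondeProd (l.beta k) k := by
  obtain ⟨n, hn⟩ : ∃ n, l.card = n := ⟨_, rfl⟩
  induction n generalizing l with
  | zero =>
    rw [sytCount_of_card_eq_zero hn, hn, ← prod_hookLength_mul_vandermondeProd_beta hk,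
      card_eq_zero.1 hn, prod_empty, one_mul, factorial_zero]
  | succ n ih =>
    have hx : Set.InjOn (fun i => (l.beta k i : ℚ)) (range k) :=
      StrictAntiOn.injOn fun a _ b hb hab => by exact_mod_cast beta_lt_beta hab (mem_range.1 hb)
    have hsum : ∑ i ∈ range k, (l.beta k i : ℚ) = n + 1 + k.choose 2 := by
      have := sum_beta hk
      rw [hn] at this
      exact_mod_cast this
    have hcorner : ∀ i ∈ l.cornerRows, (sytCount ⊥ (l.eraseCorner i) : ℚ) *
        ∏ j ∈ range k, ((l.beta k j)! : ℚ) = n ! * ((l.beta k i : ℚ) *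
          vandermondeProd (update (fun j => (l.beta k j : ℚ)) i (l.beta k i - 1)) k) := by
      intro i hi
      have := sytCount_eraseCorner_mul_prod_factorial_beta (R := ℚ) hk hi
        (ih ((colLen_le_colLen_of_le (eraseCorner_le hi) 0).trans hk)
          (by rw [card_eraseCorner hi, hn, Nat.add_sub_cancel]))
      rwa [hn, Nat.add_sub_cancel] at this
    have hsub : l.cornerRows ⊆ range k := fun i hi =>
      mem_range.2 ((mem_cornerRows.1 hi).1.trans_le hk)
    apply Nat.cast_injective (R := ℚ)
    rw [Nat.cast_mul, Nat.cast_mul, Nat.cast_prod,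
      Nat.cast_vandermondeProd fun a b hab _ => beta_antitone hab.le,
      sytCount_eq_sum_cornerRows (by omega), Nat.cast_sum, sum_mul, sum_congr rfl hcorner,
      ← mul_sum, sum_subset hsub fun i hik hi =>
        beta_mul_vandermondeProd_update_eq_zero hk (mem_range.1 hik) hi,
      sum_mul_vandermondeProd_update_sub_one hx, hsum, hn, factorial_succ]
    push_cast
    ring

end YoungDiagram

/-- The hook length formula: for any partition `l ⊢ n`, the number of standard Young
tableaux of shape `l` equals `n!` divided by the product of the hook lengths:
`f^l = n! / ∏_{(i,j) ∈ l} h_l(i,j)`. -/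
theorem stmt12 (l : YoungDiagram) :
    sytCount ⊥ l * ∏ c ∈ l.cells, hookLength l c = Nat.factorial l.card := by
  have hk := le_refl (l.colLen 0)
  have hpos : 0 < vandermondeProd (l.beta (l.colLen 0)) (l.colLen 0) :=
    vandermondeProd_pos fun i j hij hj => l.beta_lt_beta hij hj
  refine Nat.eq_of_mul_eq_mul_right hpos ?_
  rw [mul_assoc, l.prod_hookLength_mul_vandermondeProd_beta hk,
    l.sytCount_mul_prod_factorial_beta hk]
end
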